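/- For all n ≥ 4, a permutation π of {1,…,n} satisfies ssc(π) = n−2 if and only if at least one of the following holds: (a) π ends with the suffix n,2; (b) π ends with the suffix (n−1),1,n; (c) π_{n−2} = n and π_{n−1} = 1 (suffix n,1,x for some letter x); (d) π_{n−2} = n and π_n = 1 (suffix n,x,1 for some letter x); (e) π ends with the suffix (n−1),1 and the letter n occurs before the letter n−2 in π. -/

import Mathlib

/-- The largest letter of a word (`0` for the empty word). -/
def listMax (l : List ℕ) : ℕ := l.foldr max 0

lemma listMax_mem {l : List ℕ} (h : l ≠ []) : listMax l ∈ l := by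
  induction l with
  | nil => simp at h
  | cons a t ih =>
    rcases eq_or_ne t [] with rfl | ht
    · simp [listMax]
    · have ht' := ih ht
      have hcons : listMax (a :: t) = max a (listMax t) := rfl
      rcases le_total a (listMax t) with hle | hle
      · rw [hcons, max_eq_right hle]; exact List.mem_cons_of_mem _ ht'
      · rw [hcons, max_eq_left hle]; exact List.mem_cons_self

/-- The stack-sorting operator `S`: `S` of the empty word is the empty word, and
if `π` is nonempty, writing `π = L·m·R` where `m` is the greatest letter of `π`,
then `S(π) = S(L)·S(R)·m`. -/
def stackSort : List ℕ → List ℕ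
  | [] => []
  | x :: xs =>
    stackSort ((x :: xs).take ((x :: xs).idxOf (listMax (x :: xs)))) ++
      stackSort ((x :: xs).drop ((x :: xs).idxOf (listMax (x :: xs)) + 1)) ++
      [listMax (x :: xs)]
termination_by l => l.length
decreasing_by
  · have hm : listMax (x :: xs) ∈ x :: xs := listMax_mem (by simp)
    have hi : (x :: xs).idxOf (listMax (x :: xs)) < (x :: xs).length :=
      List.idxOf_lt_length_iff.mpr hm
    simp only [List.length_take, List.length_cons] at *
    omega
  · simp only [List.length_drop, List.length_cons]
    omega

/-- `π` is a permutation of `{1, …, n}`, viewed as a word containing each of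
`1, …, n` exactly once. -/
def IsPermWord (n : ℕ) (π : List ℕ) : Prop := π.Perm (List.range' 1 n)

/-- The stack-sorting complexity of `π`: the least `k ≥ 0` such that `S^k(π)`
is the identity word `1, 2, …, n` (where `n` is the length of `π`). -/
noncomputable def ssc (π : List ℕ) : ℕ :=
  sInf {k : ℕ | stackSort^[k] π = List.range' 1 π.length}

/-!
Write `π = L·n·R`. Then `S(π) = σ·n` with `σ = S(L)·S(R)` a permutation of `{1,…,n−1}`, so
`ssc π = ssc σ + 1` unless `π` is the identity, and the theorem follows by induction from `n = 3`
once we know that `π` has one of the shapes (a)–(e) for `n` exactly when `σ` has one for `n − 1`.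
For a permutation `A·m·B` of `{1,…,m}` these shapes only depend on the letters `B` after `m`, and
on the last two letters of `A` when `B` is empty (`TailShape`). The letter `n − 1` is the last
letter of `S(L)` or of `S(R)`, so the tail of `σ` after `n − 1` is `S(R)` or empty, and comparing
it with the tail `R` of `π` is a short case analysis. Its one nontrivial input: if `M = max X`,
then `S(X)` ends with `M−1,1,M` iff `X` ends with `M,1` and contains `M − 1`.
-/

open List

lemma listMax_le_iff {l : List ℕ} {M : ℕ} : listMax l ≤ M ↔ ∀ a ∈ l, a ≤ M := by
  induction l with
  | nil => simp [listMax]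
  | cons b t ih => simp [listMax, ← ih]

lemma le_listMax {l : List ℕ} {a : ℕ} (h : a ∈ l) : a ≤ listMax l :=
  listMax_le_iff.mp le_rfl a h

lemma listMax_eq_of_mem {l : List ℕ} {m : ℕ} (hm : m ∈ l) (hle : ∀ a ∈ l, a ≤ m) :
    listMax l = m :=
  le_antisymm (listMax_le_iff.mpr hle) (le_listMax hm)

lemma two_le_listMax {l : List ℕ} (hl : l.Nodup) (hpos : ∀ a ∈ l, 0 < a)
    (hlen : 2 ≤ l.length) : 2 ≤ listMax l := by
  by_contra! h
  have hsub : l ⊆ [1] := fun a ha => by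
    have := hpos a ha
    have := le_listMax ha
    simp only [mem_singleton]
    omega
  have := (hl.subperm hsub).length_le
  simp only [length_singleton] at this
  omega

lemma append_cons_inj_of_notMem {P Q P' Q' : List ℕ} {m : ℕ} (hP : m ∉ P) (hP' : m ∉ P')
    (h : P ++ m :: Q = P' ++ m :: Q') : P = P' ∧ Q = Q' := by
  have hlen := congrArg (idxOf m) h
  simp only [idxOf_append_of_notMem hP, idxOf_append_of_notMem hP', idxOf_cons_self,
    add_zero] at hlen
  obtain ⟨hPP', hQQ'⟩ := append_inj h hlen
  exact ⟨hPP', (cons_inj_right m).mp hQQ'⟩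

lemma exists_eq_append_three_of_length {B : List ℕ} (hB : 3 ≤ B.length) :
    ∃ B₀ b₁ b₂ b₃, B = B₀ ++ [b₁, b₂, b₃] := by
  have hdrop : (B.drop (B.length - 3)).length = 3 := by
    rw [length_drop]
    omega
  obtain ⟨b₁, b₂, b₃, h⟩ := length_eq_three.mp hdrop
  exact ⟨B.take (B.length - 3), b₁, b₂, b₃, by rw [← h, take_append_drop]⟩

lemma exists_eq_append_iff_reverse_prefix {π s : List ℕ} :
    (∃ w, π = w ++ s) ↔ s.reverse <+: π.reverse := by
  rw [reverse_prefix]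
  exact ⟨fun ⟨w, h⟩ => ⟨w, h.symm⟩, fun ⟨w, h⟩ => ⟨w, h.symm⟩⟩

lemma pair_sublist_append_cons_iff {A B : List ℕ} {m a : ℕ} (hA : m ∉ A) :
    [m, a] <+ A ++ m :: B ↔ a ∈ B := by
  refine ⟨fun h => ?_, fun h =>
    sublist_append_of_sublist_right (cons_sublist_cons.mpr (singleton_sublist.mpr h))⟩
  obtain ⟨l₁, l₂, hl, h₁, h₂⟩ := sublist_append_iff.mp h
  rcases l₁ with _ | ⟨b, l₁⟩
  · rw [nil_append] at hl
    subst hl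
    simpa using cons_sublist_cons.mp h₂
  · rw [cons_append, cons.injEq] at hl
    exact absurd (hl.1 ▸ h₁.subset mem_cons_self) hA

lemma range'_one_succ (m : ℕ) : range' 1 (m + 1) = range' 1 m ++ [m + 1] := by
  rw [range'_concat, Nat.one_mul, Nat.add_comm]

lemma mem_iff_of_perm_range' {l : List ℕ} {m a : ℕ} (h : l ~ range' 1 m) :
    a ∈ l ↔ 1 ≤ a ∧ a ≤ m := by
  rw [h.mem_iff, mem_range'_1]
  omega

@[simp]
lemma stackSort_nil : stackSort [] = [] := by
  simp [stackSort]

lemma stackSort_append_cons {L R : List ℕ} {m : ℕ} (hL : ∀ a ∈ L, a < m)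
    (hR : ∀ a ∈ R, a < m) : stackSort (L ++ m :: R) = stackSort L ++ stackSort R ++ [m] := by
  have hmax : listMax (L ++ m :: R) = m := by
    refine listMax_eq_of_mem (by simp) fun a ha => ?_
    rw [mem_append, mem_cons] at ha
    rcases ha with h | rfl | h
    · exact (hL a h).le
    · exact le_rfl
    · exact (hR a h).le
  have hidx : (L ++ m :: R).idxOf m = L.length := by
    rw [idxOf_append_of_notMem fun h => lt_irrefl m (hL m h), idxOf_cons_self, add_zero]
  have hdrop : (L ++ m :: R).drop (L.length + 1) = R := by
    rw [show L ++ m :: R = (L ++ [m]) ++ R by simp, drop_left' (by simp)]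
  obtain ⟨x, xs, hx⟩ := exists_cons_of_ne_nil (show L ++ m :: R ≠ [] by simp)
  rw [hx, stackSort, ← hx, hmax, hidx, take_left, hdrop]

lemma stackSort_perm (l : List ℕ) : stackSort l ~ l := by
  induction l using stackSort.induct with
  | case1 => simp
  | case2 x xs ih₁ ih₂ =>
    set l := x :: xs
    set i := l.idxOf (listMax l)
    have hi : i < l.length := idxOf_lt_length_iff.mpr (listMax_mem (by simp [l]))
    have hsplit : l = l.take i ++ listMax l :: l.drop (i + 1) := by
      conv_lhs => rw [← take_append_drop i l]
      rw [drop_eq_getElem_cons hi, getElem_idxOf hi]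
    rw [stackSort, append_assoc]
    refine ((ih₁.append ((ih₂.append (Perm.refl _)).trans (perm_append_singleton _ _)))).trans ?_
    rw [← hsplit]

@[simp]
lemma mem_stackSort {a : ℕ} {l : List ℕ} : a ∈ stackSort l ↔ a ∈ l :=
  (stackSort_perm l).mem_iff

@[simp]
lemma length_stackSort (l : List ℕ) : (stackSort l).length = l.length :=
  (stackSort_perm l).length_eq

lemma stackSort_eq_append_listMax {l : List ℕ} (h : l ≠ []) :
    ∃ u, stackSort l = u ++ [listMax l] := by
  obtain ⟨x, xs, rfl⟩ := exists_cons_of_ne_nil h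
  rw [stackSort]
  exact ⟨_, rfl⟩

lemma stackSort_eq_append_of_forall_le {l : List ℕ} {m : ℕ} (hm : m ∈ l)
    (hle : ∀ a ∈ l, a ≤ m) : ∃ u, stackSort l = u ++ [m] :=
  listMax_eq_of_mem hm hle ▸ stackSort_eq_append_listMax (ne_nil_of_mem hm)

lemma stackSort_ne_append_one {l : List ℕ} (hl : l.Nodup) (hpos : ∀ a ∈ l, 0 < a)
    (hlen : 2 ≤ l.length) (u : List ℕ) : stackSort l ≠ u ++ [1] := by
  obtain ⟨v, hv⟩ := stackSort_eq_append_listMax (l := l) (ne_nil_of_length_pos (by omega))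
  intro h
  have hlast := (append_inj' (hv.symm.trans h) rfl).2
  have := two_le_listMax hl hpos hlen
  simp_all

lemma stackSort_singleton (a : ℕ) : stackSort [a] = [a] := by
  simpa using stackSort_append_cons (L := []) (R := []) (m := a) (by simp) (by simp)

lemma stackSort_append_singleton {l : List ℕ} {m : ℕ} (h : ∀ a ∈ l, a < m) :
    stackSort (l ++ [m]) = stackSort l ++ [m] := by
  simpa using stackSort_append_cons (R := []) h (by simp)

lemma stackSort_pair {a b : ℕ} (hab : a ≠ b) : stackSort [a, b] = [min a b, max a b] := by
  rcases lt_or_gt_of_ne hab with h | h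
  · simpa [stackSort_singleton, h.le] using
      stackSort_append_cons (L := [a]) (R := []) (m := b) (by simpa using h) (by simp)
  · simpa [stackSort_singleton, h.le] using
      stackSort_append_cons (L := []) (R := [b]) (m := a) (by simp) (by simpa using h)

lemma iterate_stackSort_append_singleton (k : ℕ) {l : List ℕ} {m : ℕ} (h : ∀ a ∈ l, a < m) :
    stackSort^[k] (l ++ [m]) = stackSort^[k] l ++ [m] := by
  induction k generalizing l with
  | zero => rfl
  | succ k ih =>
    rw [Function.iterate_succ_apply, Function.iterate_succ_apply, stackSort_append_singleton h,
      ih fun a ha => h a (mem_stackSort.mp ha)]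

section SplitAtMax

variable {m : ℕ} {L R : List ℕ}

lemma exists_eq_append_cons_of_perm {π : List ℕ} (h : π ~ range' 1 (m + 1)) :
    ∃ L R, π = L ++ (m + 1) :: R ∧ L ++ R ~ range' 1 m := by
  obtain ⟨L, R, rfl⟩ := append_of_mem ((mem_iff_of_perm_range' h).mpr ⟨by omega, le_rfl⟩)
  refine ⟨L, R, rfl, ?_⟩
  rw [range'_one_succ] at h
  exact (perm_middle.symm.trans (h.trans (perm_append_singleton _ _))).cons_inv

lemma perm_append_cons (h : L ++ R ~ range' 1 m) :
    L ++ (m + 1) :: R ~ range' 1 (m + 1) := by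
  rw [range'_one_succ]
  exact perm_middle.trans ((h.cons _).trans (perm_append_singleton _ _).symm)

lemma perm_stackSort_append (h : L ++ R ~ range' 1 m) :
    stackSort L ++ stackSort R ~ range' 1 m :=
  ((stackSort_perm L).append (stackSort_perm R)).trans h

lemma stackSort_append_cons_of_perm (h : L ++ R ~ range' 1 m) :
    stackSort (L ++ (m + 1) :: R) = (stackSort L ++ stackSort R) ++ [m + 1] := by
  have hlt : ∀ a ∈ L ++ R, a < m + 1 := fun a ha => by
    have := (mem_iff_of_perm_range' h).mp ha
    omega
  exact stackSort_append_cons (fun a ha => hlt a (mem_append_left R ha))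
    fun a ha => hlt a (mem_append_right L ha)

lemma exists_iterate_stackSort_eq_range' {n : ℕ} {π : List ℕ} (h : π ~ range' 1 n) :
    ∃ k, stackSort^[k] π = range' 1 n := by
  induction n generalizing π with
  | zero => exact ⟨0, h.eq_nil⟩
  | succ m ih =>
    obtain ⟨L, R, rfl, hLR⟩ := exists_eq_append_cons_of_perm h
    obtain ⟨k, hk⟩ := ih (perm_stackSort_append hLR)
    refine ⟨k + 1, ?_⟩
    rw [Function.iterate_succ_apply, stackSort_append_cons_of_perm hLR,
      iterate_stackSort_append_singleton k, hk, range'_one_succ]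
    intro a ha
    have := (mem_iff_of_perm_range' (perm_stackSort_append hLR)).mp ha
    omega

lemma ssc_eq_zero_iff {n : ℕ} {π : List ℕ} (h : π ~ range' 1 n) :
    ssc π = 0 ↔ π = range' 1 n := by
  obtain ⟨k, hk⟩ := exists_iterate_stackSort_eq_range' h
  have hne : {k : ℕ | stackSort^[k] π = range' 1 n} ≠ ∅ :=
    Set.nonempty_iff_ne_empty.mp ⟨k, hk⟩
  simp [ssc, Nat.sInf_eq_zero, hne, h.length_eq]

lemma ssc_eq_ssc_stackSort_add_one {n : ℕ} {π : List ℕ} (h : π ~ range' 1 n)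
    (hne : π ≠ range' 1 n) : ssc π = ssc (stackSort π) + 1 := by
  have hpos : 1 ≤ ssc π :=
    Nat.one_le_iff_ne_zero.mpr fun h0 => hne ((ssc_eq_zero_iff h).mp h0)
  rw [ssc, ← Nat.sInf_add hpos]
  simp [ssc, Function.iterate_succ_apply]

lemma ssc_append_singleton {σ : List ℕ} (h : σ ~ range' 1 m) :
    ssc (σ ++ [m + 1]) = ssc σ := by
  have hlt : ∀ a ∈ σ, a < m + 1 := fun a ha => by
    have := (mem_iff_of_perm_range' h).mp ha
    omega
  simp [ssc, iterate_stackSort_append_singleton _ hlt, h.length_eq, range'_one_succ]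

lemma ssc_append_cons (h : L ++ R ~ range' 1 m)
    (hne : L ++ (m + 1) :: R ≠ range' 1 (m + 1)) :
    ssc (L ++ (m + 1) :: R) = ssc (stackSort L ++ stackSort R) + 1 := by
  rw [ssc_eq_ssc_stackSort_add_one (perm_append_cons h) hne, stackSort_append_cons_of_perm h,
    ssc_append_singleton (perm_stackSort_append h)]

end SplitAtMax

lemma ssc_eq_one_iff {n : ℕ} {π : List ℕ} (h : π ~ range' 1 n) :
    ssc π = 1 ↔ π ≠ range' 1 n ∧ stackSort π = range' 1 n := by
  by_cases hid : π = range' 1 n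
  · rw [(ssc_eq_zero_iff h).mpr hid]
    simp [hid]
  · rw [ssc_eq_ssc_stackSort_add_one h hid, Nat.add_eq_right,
      ssc_eq_zero_iff ((stackSort_perm π).trans h)]
    exact ⟨fun hs => ⟨hid, hs⟩, And.right⟩

/-- The shapes (a)–(e); the name refers to `ssc π = n - 1` being the worst case. -/
def SecondWorstShape (n : ℕ) (π : List ℕ) : Prop :=
  (∃ w : List ℕ, π = w ++ [n, 2]) ∨
  (∃ w : List ℕ, π = w ++ [n - 1, 1, n]) ∨
  (∃ (w : List ℕ) (x : ℕ), π = w ++ [n, 1, x]) ∨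
  (∃ (w : List ℕ) (x : ℕ), π = w ++ [n, x, 1]) ∨
  ((∃ w : List ℕ, π = w ++ [n - 1, 1]) ∧ ([n, n - 2] : List ℕ).Sublist π)

lemma secondWorstShape_iff_reverse {n : ℕ} {π : List ℕ} :
    SecondWorstShape n π ↔
      [2, n] <+: π.reverse ∨ [n, 1, n - 1] <+: π.reverse ∨ (∃ x, [x, 1, n] <+: π.reverse) ∨
        (∃ x, [1, x, n] <+: π.reverse) ∨ ([1, n - 1] <+: π.reverse ∧ [n, n - 2] <+ π) := by
  simp only [SecondWorstShape, exists_comm (α := List ℕ) (β := ℕ),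
    exists_eq_append_iff_reverse_prefix]
  simp

/-- `SecondWorstShape m (A ++ m :: B)`, read off from the letters `B` after `m`
(`secondWorstShape_append_cons_iff`). -/
def TailShape (m : ℕ) (A : List ℕ) : List ℕ → Prop
  | [] => ∃ w, A = w ++ [m - 1, 1]
  | [r] => r = 2
  | [r₁, r₂] => r₁ = 1 ∨ r₂ = 1
  | B@(_ :: _ :: _ :: _) => (∃ w, B = w ++ [m - 1, 1]) ∧ m - 2 ∈ B

lemma tailShape_of_three_le_length {m : ℕ} {A B : List ℕ} (hB : 3 ≤ B.length) :
    TailShape m A B ↔ (∃ w, B = w ++ [m - 1, 1]) ∧ m - 2 ∈ B := by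
  rcases B with _ | ⟨_, _ | ⟨_, _ | ⟨_, _⟩⟩⟩ <;> simp_all [TailShape]

lemma secondWorstShape_append_cons_iff {m : ℕ} (hm : 3 ≤ m) {A B : List ℕ}
    (hnd : (A ++ m :: B).Nodup) : SecondWorstShape m (A ++ m :: B) ↔ TailShape m A B := by
  have hmAB : m ∉ A ++ B := (nodup_cons.mp (nodup_middle.mp hnd)).1
  have hmA : m ∉ A := fun h => hmAB (mem_append_left B h)
  have hmB : m ∉ B := fun h => hmAB (mem_append_right A h)
  have h1 : 1 ≠ m := by omega
  have h2 : 2 ≠ m := by omega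
  have hm1 : m - 1 ≠ m := by omega
  have hpre : ∀ t, ¬ m :: t <+: A.reverse := fun t h =>
    hmA (mem_reverse.mp (h.subset mem_cons_self))
  rw [secondWorstShape_iff_reverse]
  rcases B with _ | ⟨r₁, _ | ⟨r₂, _ | ⟨r₃, B⟩⟩⟩
  · have hc : ¬ [1, m] <+: A.reverse := fun h => hmA (mem_reverse.mp (h.subset (by simp)))
    simp [TailShape, exists_eq_append_iff_reverse_prefix, h1, h2, hc]
  · have hr : m ≠ r₁ := fun h => hmB (by simp [h])
    simp [TailShape, hr, h1, hpre, hm1, @eq_comm _ 2]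
  · have hr : m ≠ r₁ ∧ m ≠ r₂ := ⟨fun h => hmB (by simp [h]), fun h => hmB (by simp [h])⟩
    simp only [reverse_append, reverse_cons, reverse_nil, nil_append, cons_append,
      cons_prefix_cons, hr.1, hr.2, nil_prefix, and_true, and_false, @eq_comm _ 1, false_and,
      and_self, exists_eq_left, exists_eq_right, false_or, TailShape]
    tauto
  · set B' := r₁ :: r₂ :: r₃ :: B
    obtain ⟨B₀, b₁, b₂, b₃, hB⟩ := exists_eq_append_three_of_length (B := B') (by simp [B'])
    rw [tailShape_of_three_le_length (by simp [B']), pair_sublist_append_cons_iff hmA, hB]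
    rw [hB] at hmB
    obtain ⟨-, hb₁, hb₂, hb₃⟩ : m ∉ B₀ ∧ m ≠ b₁ ∧ m ≠ b₂ ∧ m ≠ b₃ := by simpa using hmB
    simp [exists_eq_append_iff_reverse_prefix, hb₁, hb₂, hb₃]

lemma exists_stackSort_eq_append_iff {X : List ℕ} {M : ℕ} (hM : 3 ≤ M) (hX : X.Nodup)
    (hpos : ∀ a ∈ X, 0 < a) (hMX : M ∈ X) (hle : ∀ a ∈ X, a ≤ M) :
    (∃ w, stackSort X = w ++ [M - 1, 1, M]) ↔ (∃ w, X = w ++ [M, 1]) ∧ M - 1 ∈ X := by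
  obtain ⟨P, Q, rfl⟩ := append_of_mem hMX
  have hMPQ : M ∉ P ++ Q := (nodup_cons.mp (nodup_middle.mp hX)).1
  have hPQ : (P ++ Q).Nodup := (nodup_cons.mp (nodup_middle.mp hX)).2
  have hlt : ∀ a ∈ P ++ Q, a < M := fun a ha =>
    lt_of_le_of_ne (hle a (perm_middle.mem_iff.mpr (mem_cons_of_mem M ha)))
      fun h => hMPQ (h ▸ ha)
  have hPlt : ∀ a ∈ P, a < M := fun a ha => hlt a (mem_append_left Q ha)
  have hQlt : ∀ a ∈ Q, a < M := fun a ha => hlt a (mem_append_right P ha)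
  have hshape : (∃ w, P ++ M :: Q = w ++ [M, 1]) ↔ Q = [1] := by
    refine ⟨fun ⟨w, hw⟩ => ?_, fun hQ => ⟨P, by simp [hQ]⟩⟩
    have hMw : M ∉ w := by
      rw [hw, nodup_append] at hX
      exact fun h => hX.2.2 M h M mem_cons_self rfl
    exact (append_cons_inj_of_notMem (fun h => hMPQ (mem_append_left Q h)) hMw hw).2
  have hdrop : (∃ w, stackSort P ++ stackSort Q ++ [M] = w ++ [M - 1, 1, M]) ↔
      ∃ w, stackSort P ++ stackSort Q = w ++ [M - 1, 1] := by
    simp [exists_eq_append_iff_reverse_prefix]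
  rw [hshape, stackSort_append_cons hPlt hQlt, hdrop]
  rcases Q with _ | ⟨q, _ | ⟨q₂, Q⟩⟩
  -- with nothing after `M`, `S(P)` would end with `M - 1, 1`, hence with its maximum `1`
  · refine iff_of_false (fun ⟨w, hw⟩ => ?_) (by simp)
    rw [stackSort_nil, append_nil] at hw
    have hlen := congrArg length hw
    simp only [length_stackSort, length_append, length_cons, length_nil] at hlen
    exact stackSort_ne_append_one (by simpa using hPQ) (fun a ha => hpos a (by simp [ha]))
      (by omega) (w ++ [M - 1]) (by simp [hw])
  · rw [stackSort_singleton]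
    constructor
    · rintro ⟨w, hw⟩
      obtain ⟨hSP, hq⟩ :=
        append_inj' (show stackSort P ++ [q] = (w ++ [M - 1]) ++ [1] by simp [hw]) rfl
      have hmem : M - 1 ∈ stackSort P := by simp [hSP]
      exact ⟨by simp [hq], mem_append_left _ (mem_stackSort.mp hmem)⟩
    · rintro ⟨hq, hmem⟩
      obtain rfl : q = 1 := by simpa using hq
      have hmP : M - 1 ∈ P := by
        simpa [show M - 1 ≠ M by omega, show M - 1 ≠ 1 by omega] using hmem
      obtain ⟨u, hu⟩ := stackSort_eq_append_of_forall_le hmP fun a ha => by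
        have := hPlt a ha
        omega
      exact ⟨u, by simp [hu]⟩
  -- with two or more letters after `M`, `S(Q)` would end with its maximum `1`
  · refine iff_of_false (fun ⟨w, hw⟩ => ?_) (by simp)
    have hQnd : (q :: q₂ :: Q).Nodup := hPQ.sublist (sublist_append_right P _)
    obtain ⟨v, hv⟩ := stackSort_eq_append_listMax (l := q :: q₂ :: Q) (by simp)
    have hlast := (append_inj' (show (stackSort P ++ v) ++ [listMax (q :: q₂ :: Q)] =
      (w ++ [M - 1]) ++ [1] by simp [← hw, hv]) rfl).2
    have := two_le_listMax hQnd (fun a ha => hpos a (by simp_all)) (by simp)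
    simp only [cons.injEq, and_true] at hlast
    omega

section Translation

variable {m : ℕ} {L R : List ℕ}

lemma tailShape_stackSort_of_mem_left (h : L ++ R ~ range' 1 m) (hm : 3 ≤ m) (hmL : m ∈ L)
    {u : List ℕ} (hu : stackSort L = u ++ [m]) :
    TailShape (m + 1) L R ↔ TailShape m u (stackSort R) := by
  have hnd : (L ++ R).Nodup := h.nodup_iff.mpr nodup_range'
  have hletter : ∀ a, a ∈ L ++ R ↔ 1 ≤ a ∧ a ≤ m := fun a => mem_iff_of_perm_range' h
  have hmR : m ∉ R := disjoint_of_nodup_append hnd hmL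
  rcases R with _ | ⟨r₁, _ | ⟨r₂, _ | ⟨r₃, R⟩⟩⟩
  · have hmL' : m - 1 ∈ L := by simpa using (hletter (m - 1)).mpr ⟨by omega, by omega⟩
    have key := exists_stackSort_eq_append_iff hm (by simpa using hnd)
      (fun a ha => ((hletter a).mp (mem_append_left [] ha)).1) hmL
      (fun a ha => ((hletter a).mp (mem_append_left [] ha)).2)
    rw [hu] at key
    simpa [TailShape, exists_eq_append_iff_reverse_prefix, hmL'] using key.symm
  · simp [TailShape, stackSort_singleton]
  · have hr : r₁ ≠ r₂ := by simpa using hnd.sublist (sublist_append_right L _)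
    rw [stackSort_pair hr]
    simp only [TailShape]
    omega
  · set R' := r₁ :: r₂ :: r₃ :: R
    have hR' : 3 ≤ R'.length := by simp [R']
    rw [tailShape_of_three_le_length hR', tailShape_of_three_le_length (by simpa using hR')]
    refine iff_of_false (fun ⟨⟨w, hw⟩, _⟩ => hmR (by simp [hw])) (fun ⟨⟨w, hw⟩, _⟩ => ?_)
    exact stackSort_ne_append_one (hnd.sublist (sublist_append_right L _))
      (fun a ha => ((hletter a).mp (mem_append_right L ha)).1) (by omega) (w ++ [m - 1])
      (by simp [hw])

lemma tailShape_stackSort_of_mem_right (h : L ++ R ~ range' 1 m) (hm : 3 ≤ m) (hmR : m ∈ R)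
    {u : List ℕ} (hu : stackSort R = u ++ [m]) :
    TailShape (m + 1) L R ↔ TailShape m (stackSort L ++ u) [] := by
  have hnd : (L ++ R).Nodup := h.nodup_iff.mpr nodup_range'
  have hletter : ∀ a, a ∈ L ++ R ↔ 1 ≤ a ∧ a ≤ m := fun a => mem_iff_of_perm_range' h
  have hmL : m ∉ L := fun hmL => disjoint_of_nodup_append hnd hmL hmR
  have hLpos : ∀ a ∈ L, 0 < a := fun a ha => ((hletter a).mp (mem_append_left R ha)).1
  have hlen : L.length + R.length = m := by simpa using h.length_eq
  rw [TailShape.eq_1]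
  rcases R with _ | ⟨r₁, _ | ⟨r₂, _ | ⟨r₃, R⟩⟩⟩
  · simp at hmR
  · have hr₁ : r₁ = m := (by simpa using hmR : m = r₁).symm
    have hu₀ : u = [] := by simpa [stackSort_singleton, hr₁] using hu
    refine iff_of_false (by simp only [TailShape]; omega) (fun ⟨w, hw⟩ => ?_)
    exact stackSort_ne_append_one (hnd.sublist (sublist_append_left _ _)) hLpos
      (by simp only [length_singleton] at hlen; omega) (w ++ [m - 1]) (by simpa [hu₀] using hw)
  · have hr : r₁ ≠ r₂ := by simpa using hnd.sublist (sublist_append_right L _)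
    obtain ⟨rfl, hmax⟩ := append_inj'
      (show [min r₁ r₂] ++ [max r₁ r₂] = u ++ [m] by simpa [stackSort_pair hr] using hu) rfl
    simp only [cons.injEq, and_true] at hmax
    simp only [TailShape]
    constructor
    · intro h1
      have hm1 : m - 1 ∈ L := by
        have := (hletter (m - 1)).mpr ⟨by omega, by omega⟩
        simp only [mem_append, mem_cons, not_mem_nil, or_false] at this
        exact this.resolve_right (by omega)
      obtain ⟨v, hv⟩ := stackSort_eq_append_of_forall_le hm1 fun a ha => by
        have := (hletter a).mp (mem_append_left _ ha)
        have : a ≠ m := fun h => hmL (h ▸ ha)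
        omega
      exact ⟨v, by simp [hv, show min r₁ r₂ = 1 by omega]⟩
    · rintro ⟨w, hw⟩
      have := (append_inj'
        (show stackSort L ++ [min r₁ r₂] = (w ++ [m - 1]) ++ [1] by simpa using hw) rfl).2
      simp only [cons.injEq, and_true] at this
      omega
  · set R' := r₁ :: r₂ :: r₃ :: R
    have hR' : 3 ≤ R'.length := by simp [R']
    rw [tailShape_of_three_le_length hR']
    have key := exists_stackSort_eq_append_iff hm (hnd.sublist (sublist_append_right L _))
      (fun a ha => ((hletter a).mp (mem_append_right L ha)).1) hmR
      (fun a ha => ((hletter a).mp (mem_append_right L ha)).2)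
    obtain ⟨v, a, b, c, hv⟩ :=
      exists_eq_append_three_of_length (B := stackSort R') (by simpa using hR')
    obtain ⟨rfl, -⟩ :=
      append_inj' (show u ++ [m] = (v ++ [a, b]) ++ [c] by simp [← hu, hv]) rfl
    rw [hu] at key
    simpa [exists_eq_append_iff_reverse_prefix] using key.symm

lemma secondWorstShape_append_cons_iff_stackSort (h : L ++ R ~ range' 1 m) (hm : 3 ≤ m) :
    SecondWorstShape (m + 1) (L ++ (m + 1) :: R) ↔
      SecondWorstShape m (stackSort L ++ stackSort R) := by
  have hσnd : (stackSort L ++ stackSort R).Nodup :=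
    (perm_stackSort_append h).nodup_iff.mpr nodup_range'
  have hle : ∀ a ∈ L ++ R, a ≤ m := fun a ha => ((mem_iff_of_perm_range' h).mp ha).2
  rw [secondWorstShape_append_cons_iff (by omega)
    ((perm_append_cons h).nodup_iff.mpr nodup_range')]
  rcases mem_append.mp ((mem_iff_of_perm_range' h).mpr ⟨by omega, le_rfl⟩) with hmL | hmR
  · obtain ⟨u, hu⟩ := stackSort_eq_append_of_forall_le hmL fun a ha =>
      hle a (mem_append_left R ha)
    rw [hu, append_assoc, singleton_append] at hσnd ⊢
    rw [secondWorstShape_append_cons_iff hm hσnd, tailShape_stackSort_of_mem_left h hm hmL hu]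
  · obtain ⟨u, hu⟩ := stackSort_eq_append_of_forall_le hmR fun a ha =>
      hle a (mem_append_right L ha)
    rw [hu, ← append_assoc] at hσnd ⊢
    rw [secondWorstShape_append_cons_iff hm hσnd, tailShape_stackSort_of_mem_right h hm hmR hu]

end Translation

lemma ssc_eq_one_iff_secondWorstShape_three {π : List ℕ} (h : π ~ range' 1 3) :
    ssc π = 1 ↔ SecondWorstShape 3 π := by
  rw [ssc_eq_one_iff h, show range' 1 3 = [1, 2, 3] from rfl]
  have hπ : π ∈ permutations' [1, 2, 3] := mem_permutations'.mpr h
  simp only [permutations', flatMap_cons, permutations'Aux, flatMap_nil, append_nil, map_cons,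
    map_nil, cons_append, nil_append, mem_cons, not_mem_nil, or_false] at hπ
  rcases hπ with rfl | rfl | rfl | rfl | rfl | rfl <;>
    simp [stackSort, listMax, secondWorstShape_iff_reverse]

lemma not_secondWorstShape_range' {m : ℕ} (hm : 3 ≤ m) :
    ¬ SecondWorstShape (m + 1) (range' 1 (m + 1)) := by
  obtain ⟨k, rfl⟩ : ∃ k, m = k + 1 := ⟨m - 1, by omega⟩
  rw [range'_one_succ, secondWorstShape_append_cons_iff (by omega)
    (by rw [← range'_one_succ]; exact nodup_range'), TailShape.eq_1, range'_one_succ]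
  simp only [exists_eq_append_iff_reverse_prefix, reverse_append, reverse_cons, reverse_nil,
    nil_append, cons_append, cons_prefix_cons]
  omega

theorem ssc_eq_sub_two_iff_secondWorstShape {n : ℕ} (hn : 3 ≤ n) {π : List ℕ}
    (h : π ~ range' 1 n) : ssc π = n - 2 ↔ SecondWorstShape n π := by
  induction n, hn using Nat.le_induction generalizing π with
  | base => exact ssc_eq_one_iff_secondWorstShape_three h
  | succ m hm ih =>
    obtain ⟨L, R, rfl, hLR⟩ := exists_eq_append_cons_of_perm h
    by_cases hid : L ++ (m + 1) :: R = range' 1 (m + 1)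
    · rw [hid, (ssc_eq_zero_iff (Perm.refl _)).mpr rfl]
      exact iff_of_false (by omega) (not_secondWorstShape_range' hm)
    · rw [ssc_append_cons hLR hid, secondWorstShape_append_cons_iff_stackSort hLR hm,
        ← ih (perm_stackSort_append hLR)]
      omega

/-- For all `n ≥ 4`, a permutation `π` of `{1,…,n}` satisfies `ssc(π) = n−2` iff
(a) `π` ends with `n,2`; or (b) `π` ends with `(n−1),1,n`; or (c) `π` ends with
`n,1,x` for some letter `x`; or (d) `π` ends with `n,x,1` for some letter `x`;
or (e) `π` ends with `(n−1),1` and `n` occurs before `n−2` in `π`. -/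
theorem ssc_eq_n_sub_two_iff (n : ℕ) (hn : 4 ≤ n) (π : List ℕ) (hπ : IsPermWord n π) :
    ssc π = n - 2 ↔
      (∃ w : List ℕ, π = w ++ [n, 2]) ∨
      (∃ w : List ℕ, π = w ++ [n - 1, 1, n]) ∨
      (∃ (w : List ℕ) (x : ℕ), π = w ++ [n, 1, x]) ∨
      (∃ (w : List ℕ) (x : ℕ), π = w ++ [n, x, 1]) ∨
      ((∃ w : List ℕ, π = w ++ [n - 1, 1]) ∧ ([n, n - 2] : List ℕ).Sublist π) :=
  ssc_eq_sub_two_iff_secondWorstShape (by omega) hπ
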